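/- arXiv:1712.05915 — 4 statements merged into one kernel-verified Lean document; each statement's English description precedes it below -/
import Mathlib

section
/- For every a > 0 and H ∈ (1/2, 1), one has (2H-1) ∫_{[0,∞)²} e^{-a(t+s)} |t-s|^{2H-2} ds dt = a^{-2H} Γ(2H). -/
/-!
With `b = 2H - 2 > -1`, substituting `s = t + u` turns the inner integral into `e^{-2at} F(t)`,
where `F(t) = ∫_{-t}^∞ e^{-au} |u|^b du = C + ∫_0^t v^b e^{av} dv` and
`C = ∫_0^∞ u^b e^{-au} du = Γ(b+1) a^{-(b+1)}`. The Laplace-transform rule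
`∫_0^∞ F e^{-ct} = c⁻¹ (F(0) + ∫_0^∞ F' e^{-ct})` at `c = 2a`, with `F(0) = C` and
`F'(t) e^{-2at} = t^b e^{-at}`, gives the double integral the value `(2a)⁻¹ (C + C) = C / a`;
then `(b+1) Γ(b+1) = Γ(b+2)`.
-/

open MeasureTheory Real Set Filter Topology

theorem setIntegral_Ioi_eq_comp_add_right {E : Type*} [NormedAddCommGroup E] [NormedSpace ℝ E]
    (f : ℝ → E) (a d : ℝ) : ∫ x in Ioi a, f x = ∫ x in Ioi (a - d), f (x + d) := by
  rw [← preimage_add_const_Ioi]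
  exact ((measurePreserving_add_right volume d).setIntegral_preimage_emb
    (MeasurableEquiv.addRight d).measurableEmbedding f (Ioi a)).symm

theorem intervalIntegrable_abs_rpow {r : ℝ} (hr : -1 < r) (a b : ℝ) :
    IntervalIntegrable (fun x => |x| ^ r) volume a b := by
  have h_nonneg : ∀ c, 0 ≤ c → IntervalIntegrable (fun x => |x| ^ r) volume 0 c := by
    intro c hc
    refine (intervalIntegral.intervalIntegrable_rpow' hr).congr fun x hx => ?_
    rw [uIoc_of_le hc] at hx
    simp only [abs_of_pos hx.1]
  have h_zero : ∀ c, IntervalIntegrable (fun x => |x| ^ r) volume 0 c := by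
    intro c
    rcases le_total 0 c with hc | hc
    · exact h_nonneg c hc
    · rw [IntervalIntegrable.iff_comp_neg]
      simpa using h_nonneg (-c) (by linarith)
  exact (h_zero a).symm.trans (h_zero b)

theorem integral_Ioi_mul_exp_neg_mul_of_hasDerivAt {c : ℝ} (hc : 0 < c) {F f : ℝ → ℝ}
    (hF0 : ContinuousWithinAt F (Ici 0) 0) (hF : ∀ t ∈ Ioi 0, HasDerivAt F (f t) t)
    (hFint : IntegrableOn (fun t => F t * exp (-(c * t))) (Ioi 0))
    (hfint : IntegrableOn (fun t => f t * exp (-(c * t))) (Ioi 0))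
    (hlim : Tendsto (fun t => F t * exp (-(c * t))) atTop (𝓝 0)) :
    ∫ t in Ioi 0, F t * exp (-(c * t)) =
      c⁻¹ * (F 0 + ∫ t in Ioi 0, f t * exp (-(c * t))) := by
  have hv : ∀ t ∈ Ioi (0 : ℝ),
      HasDerivAt (fun t => -c⁻¹ * exp (-(c * t))) (exp (-(c * t))) t := by
    intro t _
    have h : HasDerivAt (fun t => -c⁻¹ * exp (-(c * t)))
        (-c⁻¹ * (exp (-(c * t)) * -c)) t := by
      simpa only [neg_mul, mul_one] using
        ((hasDerivAt_id' t).const_mul (-c)).exp.const_mul (-c⁻¹)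
    exact h.congr_deriv (by field_simp)
  have h_zero : Tendsto (fun t => F t * (-c⁻¹ * exp (-(c * t)))) (𝓝[>] 0)
      (𝓝 (F 0 * (-c⁻¹ * exp (-(c * 0))))) :=
    (hF0.mono Ioi_subset_Ici_self).tendsto.mul
      ((by fun_prop : Continuous fun t => -c⁻¹ * exp (-(c * t))).tendsto 0
        |>.mono_left nhdsWithin_le_nhds)
  have h_infty :
      Tendsto (fun t => F t * (-c⁻¹ * exp (-(c * t)))) atTop (𝓝 (-c⁻¹ * 0)) := by
    refine (hlim.const_mul (-c⁻¹)).congr fun t => ?_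
    ring
  have h_parts := integral_Ioi_mul_deriv_eq_deriv_mul hF hv hFint
    (by simp only [Pi.mul_def, mul_left_comm (f _)]; exact hfint.const_mul _) h_zero h_infty
  simp only [h_parts, mul_left_comm (f _), integral_const_mul, mul_zero, neg_zero, exp_zero]
  ring

section

variable {a b : ℝ}

theorem integrableOn_Ioi_rpow_mul_exp_neg_mul (ha : 0 < a) (hb : -1 < b) :
    IntegrableOn (fun x => x ^ b * exp (-(a * x))) (Ioi 0) := by
  simpa only [rpow_one, neg_mul] using integrableOn_rpow_mul_exp_neg_mul_rpow hb one_pos ha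

theorem integral_Ioi_rpow_mul_exp_neg_mul (ha : 0 < a) (hb : -1 < b) :
    ∫ x in Ioi 0, x ^ b * exp (-(a * x)) = a ^ (-(b + 1)) * Gamma (b + 1) := by
  have h := integral_rpow_mul_exp_neg_mul_Ioi (by linarith : 0 < b + 1) ha
  rwa [add_sub_cancel_right, one_div, inv_rpow ha.le, ← rpow_neg ha.le] at h

theorem integral_Ioi_exp_mul_abs_sub_rpow (ha : 0 < a) (hb : -1 < b) {t : ℝ} (ht : 0 ≤ t) :
    ∫ s in Ioi 0, exp (-a * (t + s)) * |t - s| ^ b =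
      ((∫ v in 0..t, v ^ b * exp (a * v)) + ∫ u in Ioi 0, u ^ b * exp (-(a * u))) *
        exp (-(2 * a * t)) := by
  have h_shift : ∀ u, exp (-a * (t + (u + t))) * |t - (u + t)| ^ b =
      |u| ^ b * exp (-(a * u)) * exp (-(2 * a * t)) := by
    intro u
    rw [show t - (u + t) = -u by ring, abs_neg, mul_comm, mul_assoc, ← exp_add]
    ring_nf
  have h_reflect :
      ∫ u in -t..0, |u| ^ b * exp (-(a * u)) = ∫ v in 0..t, v ^ b * exp (a * v) := by
    have h := intervalIntegral.integral_comp_neg (a := 0) (b := t)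
      (fun u => |u| ^ b * exp (-(a * u)))
    rw [neg_zero] at h
    rw [← h]
    refine intervalIntegral.integral_congr fun v hv => ?_
    rw [uIcc_of_le ht] at hv
    simp only [abs_neg, abs_of_nonneg hv.1, mul_neg, neg_neg]
  have h_abs : EqOn (fun u => |u| ^ b * exp (-(a * u))) (fun u => u ^ b * exp (-(a * u)))
      (Ioi 0) := fun u hu => by simp only [abs_of_pos (mem_Ioi.mp hu)]
  rw [setIntegral_Ioi_eq_comp_add_right _ 0 t, zero_sub]
  simp only [h_shift]
  rw [integral_mul_const, ← intervalIntegral.integral_interval_add_Ioi'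
    ((intervalIntegrable_abs_rpow hb _ _).mul_continuousOn (by fun_prop))
    ((integrableOn_Ioi_rpow_mul_exp_neg_mul ha hb).congr_fun h_abs.symm measurableSet_Ioi),
    h_reflect, setIntegral_congr_fun measurableSet_Ioi h_abs]

theorem hasDerivAt_integral_rpow_mul_exp (hb : -1 < b) {t : ℝ} (ht : 0 < t) :
    HasDerivAt (fun t => ∫ v in 0..t, v ^ b * exp (a * v)) (t ^ b * exp (a * t)) t :=
  intervalIntegral.integral_hasDerivAt_right
    ((intervalIntegral.intervalIntegrable_rpow' hb).mul_continuousOn (by fun_prop))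
    (StronglyMeasurable.stronglyMeasurableAtFilter
      (by fun_prop : Measurable fun v => v ^ b * exp (a * v)).stronglyMeasurable)
    ((continuousAt_rpow_const t b (Or.inl ht.ne')).mul (by fun_prop))

theorem integral_rpow_mul_exp_le (ha : 0 ≤ a) (hb : -1 < b) {t : ℝ} (ht : 0 ≤ t) :
    ∫ v in 0..t, v ^ b * exp (a * v) ≤ t ^ (b + 1) / (b + 1) * exp (a * t) := by
  calc ∫ v in 0..t, v ^ b * exp (a * v)
      ≤ ∫ v in 0..t, v ^ b * exp (a * t) := by
        refine intervalIntegral.integral_mono_on ht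
          ((intervalIntegral.intervalIntegrable_rpow' hb).mul_continuousOn (by fun_prop))
          ((intervalIntegral.intervalIntegrable_rpow' hb).mul_const _) fun v hv => ?_
        gcongr
        · exact rpow_nonneg hv.1 b
        · exact hv.2
    _ = t ^ (b + 1) / (b + 1) * exp (a * t) := by
        rw [intervalIntegral.integral_mul_const, integral_rpow (Or.inl hb),
          zero_rpow (by linarith), sub_zero]

theorem norm_integral_rpow_mul_exp_add_mul_exp_le (ha : 0 ≤ a) (hb : -1 < b) {C t : ℝ}
    (hC : 0 ≤ C) (ht : 0 ≤ t) :
    ‖((∫ v in 0..t, v ^ b * exp (a * v)) + C) * exp (-(2 * a * t))‖ ≤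
      (t ^ (b + 1) / (b + 1) + C) * exp (-(a * t)) := by
  have h_nonneg : 0 ≤ ∫ v in 0..t, v ^ b * exp (a * v) :=
    intervalIntegral.integral_nonneg ht fun v hv => mul_nonneg (rpow_nonneg hv.1 b) (exp_pos _).le
  rw [Real.norm_of_nonneg (mul_nonneg (add_nonneg h_nonneg hC) (exp_pos _).le)]
  calc ((∫ v in 0..t, v ^ b * exp (a * v)) + C) * exp (-(2 * a * t))
      ≤ (t ^ (b + 1) / (b + 1) * exp (a * t) + C * exp (a * t)) * exp (-(2 * a * t)) := by
        gcongr
        · exact integral_rpow_mul_exp_le ha hb ht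
        · exact le_mul_of_one_le_right hC (one_le_exp (mul_nonneg ha ht))
    _ = (t ^ (b + 1) / (b + 1) + C) * (exp (a * t) * exp (-(2 * a * t))) := by ring
    _ = (t ^ (b + 1) / (b + 1) + C) * exp (-(a * t)) := by
        rw [← exp_add]
        ring_nf

theorem integrableOn_Ioi_rpow_div_add_mul_exp_neg_mul (ha : 0 < a) (hb : -1 < b) (C : ℝ) :
    IntegrableOn (fun t => (t ^ (b + 1) / (b + 1) + C) * exp (-(a * t))) (Ioi 0) := by
  have h_pow : IntegrableOn (fun t => t ^ (b + 1) * exp (-(a * t)) / (b + 1)) (Ioi 0) :=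
    (integrableOn_Ioi_rpow_mul_exp_neg_mul ha (by linarith)).div_const _
  have h_exp : IntegrableOn (fun t => C * (t ^ (0 : ℝ) * exp (-(a * t)))) (Ioi 0) :=
    (integrableOn_Ioi_rpow_mul_exp_neg_mul ha (by norm_num)).const_mul C
  refine (h_pow.fun_add h_exp).congr_fun (fun t _ => ?_) measurableSet_Ioi
  simp only [rpow_zero]
  ring

theorem tendsto_rpow_div_add_mul_exp_neg_mul_atTop (ha : 0 < a) (C : ℝ) :
    Tendsto (fun t => (t ^ (b + 1) / (b + 1) + C) * exp (-(a * t))) atTop (𝓝 0) := by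
  have h := ((tendsto_rpow_mul_exp_neg_mul_atTop_nhds_zero (b + 1) a ha).div_const (b + 1)).add
    ((tendsto_rpow_mul_exp_neg_mul_atTop_nhds_zero 0 a ha).const_mul C)
  simp only [zero_div, mul_zero, add_zero, rpow_zero, one_mul, neg_mul] at h
  refine h.congr fun t => ?_
  ring

theorem integral_Ioi_integral_Ioi_exp_mul_abs_sub_rpow (ha : 0 < a) (hb : -1 < b) :
    ∫ t in Ioi 0, ∫ s in Ioi 0, exp (-a * (t + s)) * |t - s| ^ b =
      a⁻¹ * ∫ u in Ioi 0, u ^ b * exp (-(a * u)) := by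
  set C := ∫ u in Ioi 0, u ^ b * exp (-(a * u)) with hC_def
  set G : ℝ → ℝ := fun t => ∫ v in 0..t, v ^ b * exp (a * v) with hG
  have hG_cont : Continuous G := intervalIntegral.continuous_primitive (fun _ _ =>
    (intervalIntegral.intervalIntegrable_rpow' hb).mul_continuousOn (by fun_prop)) 0
  have hC : 0 ≤ C := setIntegral_nonneg measurableSet_Ioi fun u hu =>
    mul_nonneg (rpow_nonneg (le_of_lt hu) b) (exp_pos _).le
  have h_bound : ∀ t ∈ Ioi (0 : ℝ),
      ‖(G t + C) * exp (-(2 * a * t))‖ ≤ (t ^ (b + 1) / (b + 1) + C) * exp (-(a * t)) :=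
    fun t ht => norm_integral_rpow_mul_exp_add_mul_exp_le ha.le hb hC (le_of_lt ht)
  have h_kernel : ∀ t, t ^ b * exp (a * t) * exp (-(2 * a * t)) = t ^ b * exp (-(a * t)) := by
    intro t
    rw [mul_assoc, ← exp_add]
    ring_nf
  have h_laplace := integral_Ioi_mul_exp_neg_mul_of_hasDerivAt (by positivity : 0 < 2 * a)
    (F := fun t => G t + C) (f := fun t => t ^ b * exp (a * t))
    (hG_cont.add continuous_const).continuousWithinAt
    (fun t ht => (hasDerivAt_integral_rpow_mul_exp hb ht).add_const C)
    ((integrableOn_Ioi_rpow_div_add_mul_exp_neg_mul ha hb C).mono'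
      ((hG_cont.add continuous_const).mul (by fun_prop)).aestronglyMeasurable
      ((ae_restrict_iff' measurableSet_Ioi).mpr (Eventually.of_forall h_bound)))
    ((integrableOn_Ioi_rpow_mul_exp_neg_mul ha hb).congr_fun (fun t _ => (h_kernel t).symm)
      measurableSet_Ioi)
    (squeeze_zero_norm' (eventually_gt_atTop 0 |>.mono h_bound)
      (tendsto_rpow_div_add_mul_exp_neg_mul_atTop ha C))
  simp only [h_kernel, ← hC_def, hG, intervalIntegral.integral_same, zero_add] at h_laplace
  rw [setIntegral_congr_fun measurableSet_Ioi
    fun t ht => integral_Ioi_exp_mul_abs_sub_rpow ha hb (le_of_lt ht), h_laplace]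
  field_simp
  ring

end

theorem gamma_double_integral_general (a H : ℝ) (ha : 0 < a) (hH1 : 1/2 < H) :
    (2*H - 1) * ∫ t in Ioi (0:ℝ), ∫ s in Ioi (0:ℝ),
        Real.exp (-a*(t+s)) * |t - s| ^ (2*H - 2) =
      a ^ (-(2*H)) * Real.Gamma (2*H) := by
  have hb : -1 < 2 * H - 2 := by linarith
  have h_gamma : Gamma (2 * H) = (2 * H - 1) * Gamma (2 * H - 1) := by
    rw [← Gamma_add_one (by linarith), sub_add_cancel]
  have h_pow : a ^ (-(2 * H)) = a⁻¹ * a ^ (-(2 * H - 1)) := by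
    rw [← rpow_neg_one, ← rpow_add ha]
    ring_nf
  rw [integral_Ioi_integral_Ioi_exp_mul_abs_sub_rpow ha hb, integral_Ioi_rpow_mul_exp_neg_mul ha hb,
    show 2 * H - 2 + 1 = 2 * H - 1 by ring, h_gamma, h_pow]
  ring

theorem gamma_double_integral (a H : ℝ) (ha : 0 < a) (hH1 : 1/2 < H) (hH2 : H < 1) :
    (2*H - 1) * ∫ t in Ioi (0:ℝ), ∫ s in Ioi (0:ℝ),
        Real.exp (-a*(t+s)) * |t - s| ^ (2*H - 2) =
      a ^ (-(2*H)) * Real.Gamma (2*H) :=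
  gamma_double_integral_general a H ha hH1
end

section
/- Let a > 0, H ∈ (1/2,1), and define m(T) = H(2H-1) ∫_0^T ∫_0^T e^{-au} e^{-av} |u-v|^{2H-2} du dv for T ≥ 0. Then m(T) converges to a^{-2H} H Γ(2H) as T → ∞. -/
/-!
The integrand is symmetric in `(u, v)`, so its integral over the quadrant `(0, ∞)²` is twice the
integral over `{u > v}`. There the substitution `u = v + w` factors it as
`∫ e^{-2av} dv · ∫ w^{2H-2} e^{-aw} dw = (1 / 2a) · a^{1-2H} Γ(2H - 1)`, which is finite
because `2H - 2 > -1`. Integrability lets the integrals over the squares `(0, T]²` converge to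
the quadrant integral, and `(2H - 1) Γ(2H - 1) = Γ(2H)` absorbs the prefactor.
-/

open MeasureTheory Real Set Filter intervalIntegral
open scoped ENNReal Topology

lemma setLIntegral_Ioi_zero_comp_add_right (v : ℝ) {f : ℝ → ℝ≥0∞} (hf : Measurable f) :
    ∫⁻ w in Ioi 0, f (w + v) = ∫⁻ u in Ioi v, f u := by
  have h := (measurePreserving_add_right volume v).setLIntegral_comp_preimage
    (s := Ioi v) measurableSet_Ioi hf
  rwa [preimage_add_const_Ioi, sub_self] at h

section Triangle

variable {c : ℝ} {g : ℝ → ℝ → ℝ≥0∞}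

lemma measurable_uncurry_indicator_Iic (hg : Measurable (Function.uncurry g)) :
    Measurable (Function.uncurry fun v u => (Iic v).indicator (g · v) u) := by
  have h : (Function.uncurry fun v u => (Iic v).indicator (g · v) u)
      = {p : ℝ × ℝ | p.2 ≤ p.1}.indicator (fun p => g p.2 p.1) := by
    ext p; by_cases h : p.2 ≤ p.1 <;> simp [Function.uncurry, h]
  rw [h]
  exact (hg.comp measurable_swap).indicator (measurableSet_le measurable_snd measurable_fst)

lemma setLIntegral_Ioi_indicator_Iic (v : ℝ) :
    ∫⁻ u in Ioi c, (Iic v).indicator (g · v) u = ∫⁻ u in Ioc c v, g u v := by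
  rw [lintegral_indicator measurableSet_Iic, Measure.restrict_restrict measurableSet_Iic,
    Iic_inter_Ioi]

lemma measurable_setLIntegral_Ioc (hg : Measurable (Function.uncurry g)) :
    Measurable fun v => ∫⁻ u in Ioc c v, g u v := by
  simpa only [setLIntegral_Ioi_indicator_Iic] using
    (measurable_uncurry_indicator_Iic hg).lintegral_prod_right
      (ν := volume.restrict (Ioi c))

lemma lintegral_Ioi_lintegral_Ioc_swap (hg : Measurable (Function.uncurry g)) :
    ∫⁻ v in Ioi c, ∫⁻ u in Ioc c v, g u v = ∫⁻ u in Ioi c, ∫⁻ v in Ioi u, g u v := by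
  have houter : ∀ u ∈ Ioi c,
      ∫⁻ v in Ioi c, (Iic v).indicator (g · v) u = ∫⁻ v in Ioi u, g u v := fun u hu => by
    have h : ∀ v, (Iic v).indicator (g · v) u = (Ici u).indicator (g u ·) v := fun v => by
      by_cases h : u ≤ v <;> simp [h]
    rw [lintegral_congr h, lintegral_indicator measurableSet_Ici,
      Measure.restrict_restrict measurableSet_Ici, inter_eq_left.mpr (Ici_subset_Ioi.mpr hu),
      setLIntegral_congr Ioi_ae_eq_Ici.symm]
  calc ∫⁻ v in Ioi c, ∫⁻ u in Ioc c v, g u v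
      = ∫⁻ v in Ioi c, ∫⁻ u in Ioi c, (Iic v).indicator (g · v) u := by
        simp only [setLIntegral_Ioi_indicator_Iic]
    _ = ∫⁻ u in Ioi c, ∫⁻ v in Ioi c, (Iic v).indicator (g · v) u :=
        lintegral_lintegral_swap (measurable_uncurry_indicator_Iic hg).aemeasurable
    _ = ∫⁻ u in Ioi c, ∫⁻ v in Ioi u, g u v := setLIntegral_congr_fun measurableSet_Ioi houter

lemma lintegral_Ioi_prod_Ioi_of_swap_eq {f : ℝ × ℝ → ℝ≥0∞} (hf : Measurable f)
    (hsymm : ∀ p, f p.swap = f p) :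
    ∫⁻ p in Ioi c ×ˢ Ioi c, f p = 2 * ∫⁻ v in Ioi c, ∫⁻ u in Ioi v, f (u, v) := by
  have hsplit : ∀ v ∈ Ioi c, ∫⁻ u in Ioi c, f (u, v)
      = (∫⁻ u in Ioc c v, f (u, v)) + ∫⁻ u in Ioi v, f (u, v) := fun v hv => by
    rw [← Ioc_union_Ioi_eq_Ioi (le_of_lt hv),
      lintegral_union measurableSet_Ioi (Ioc_disjoint_Ioi le_rfl)]
  calc ∫⁻ p in Ioi c ×ˢ Ioi c, f p
      = ∫⁻ v in Ioi c, ∫⁻ u in Ioi c, f (u, v) := by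
        rw [Measure.volume_eq_prod, ← Measure.prod_restrict,
          lintegral_prod_symm _ hf.aemeasurable]
    _ = ∫⁻ v in Ioi c, ((∫⁻ u in Ioc c v, f (u, v)) + ∫⁻ u in Ioi v, f (u, v)) :=
        setLIntegral_congr_fun measurableSet_Ioi hsplit
    _ = (∫⁻ v in Ioi c, ∫⁻ u in Ioc c v, f (u, v))
          + ∫⁻ v in Ioi c, ∫⁻ u in Ioi v, f (u, v) :=
        lintegral_add_left (measurable_setLIntegral_Ioc (g := fun u v => f (u, v)) hf) _
    _ = 2 * ∫⁻ v in Ioi c, ∫⁻ u in Ioi v, f (u, v) := by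
        rw [lintegral_Ioi_lintegral_Ioc_swap (g := fun u v => f (u, v)) hf, two_mul]
        congr 1
        refine setLIntegral_congr_fun measurableSet_Ioi fun u _ => lintegral_congr fun v => ?_
        exact (hsymm (u, v)).symm

end Triangle

lemma lintegral_Ioi_exp_neg_mul {b : ℝ} (hb : 0 < b) :
    ∫⁻ v in Ioi 0, ENNReal.ofReal (exp (-(b * v))) = ENNReal.ofReal (1 / b) := by
  have hint : IntegrableOn (fun v : ℝ => exp (-(b * v))) (Ioi 0) := by
    simpa [neg_mul] using exp_neg_integrableOn_Ioi 0 hb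
  rw [← ofReal_integral_eq_lintegral_ofReal hint (Eventually.of_forall fun v => (exp_pos _).le)]
  congr 1
  simpa using integral_rpow_mul_exp_neg_mul_Ioi one_pos hb

lemma lintegral_Ioi_exp_neg_mul_mul_rpow {a β : ℝ} (ha : 0 < a) (hβ : -1 < β) :
    ∫⁻ w in Ioi 0, ENNReal.ofReal (exp (-(a * w))) * ENNReal.ofReal (w ^ β)
      = ENNReal.ofReal ((1 / a) ^ (β + 1) * Gamma (β + 1)) := by
  have hint : IntegrableOn (fun w : ℝ => w ^ β * exp (-(a * w))) (Ioi 0) := by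
    simpa [neg_mul] using integrableOn_rpow_mul_exp_neg_mul_rpow hβ one_pos ha
  have hval := integral_rpow_mul_exp_neg_mul_Ioi (a := β + 1) (by linarith) ha
  rw [add_sub_cancel_right] at hval
  have hnonneg : 0 ≤ᵐ[volume.restrict (Ioi 0)] fun w : ℝ => w ^ β * exp (-(a * w)) :=
    (ae_restrict_iff' measurableSet_Ioi).mpr (Eventually.of_forall fun w (hw : 0 < w) => by
      positivity)
  rw [← hval, ofReal_integral_eq_lintegral_ofReal hint hnonneg]
  refine setLIntegral_congr_fun measurableSet_Ioi fun w (hw : 0 < w) => ?_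
  rw [← ENNReal.ofReal_mul (exp_pos _).le, mul_comm]

lemma lintegral_Ioi_prod_Ioi_exp_mul_exp_mul_abs_sub {a : ℝ} (ha : 0 < a) {φ : ℝ → ℝ≥0∞}
    (hφ : Measurable φ) :
    ∫⁻ p in Ioi 0 ×ˢ Ioi 0,
        ENNReal.ofReal (exp (-(a * p.1))) * ENNReal.ofReal (exp (-(a * p.2))) * φ |p.1 - p.2|
      = ENNReal.ofReal (1 / a) * ∫⁻ w in Ioi 0, ENNReal.ofReal (exp (-(a * w))) * φ w := by
  have hinner : ∀ v ∈ Ioi (0 : ℝ), ∫⁻ u in Ioi v, ENNReal.ofReal (exp (-(a * u)))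
        * ENNReal.ofReal (exp (-(a * v))) * φ |u - v|
      = ENNReal.ofReal (exp (-(2 * a * v)))
          * ∫⁻ w in Ioi 0, ENNReal.ofReal (exp (-(a * w))) * φ w := by
    intro v _
    rw [← setLIntegral_Ioi_zero_comp_add_right v (by fun_prop),
      ← lintegral_const_mul _ (by fun_prop)]
    refine setLIntegral_congr_fun measurableSet_Ioi fun w (hw : 0 < w) => ?_
    rw [add_sub_cancel_right, abs_of_pos hw, ← mul_assoc, ← ENNReal.ofReal_mul (exp_pos _).le,
      ← ENNReal.ofReal_mul (exp_pos _).le, ← exp_add, ← exp_add]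
    ring_nf
  rw [lintegral_Ioi_prod_Ioi_of_swap_eq (by fun_prop) fun p => by
      rw [Prod.fst_swap, Prod.snd_swap, abs_sub_comm, mul_comm (ENNReal.ofReal _)],
    setLIntegral_congr_fun measurableSet_Ioi hinner, lintegral_mul_const _ (by fun_prop),
    lintegral_Ioi_exp_neg_mul (by positivity), ← mul_assoc, ← ENNReal.ofReal_ofNat 2,
    ← ENNReal.ofReal_mul zero_le_two]
  congr 2
  field_simp

section Kernel

variable {a β : ℝ}

lemma lintegral_Ioi_prod_Ioi_exp_mul_exp_mul_abs_sub_rpow (ha : 0 < a) (hβ : -1 < β) :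
    ∫⁻ p in Ioi 0 ×ˢ Ioi 0,
        ENNReal.ofReal (exp (-(a * p.1)) * exp (-(a * p.2)) * |p.1 - p.2| ^ β)
      = ENNReal.ofReal (a ^ (-(β + 2)) * Gamma (β + 1)) := by
  have hsplit : ∀ p : ℝ × ℝ,
      ENNReal.ofReal (exp (-(a * p.1)) * exp (-(a * p.2)) * |p.1 - p.2| ^ β)
        = ENNReal.ofReal (exp (-(a * p.1))) * ENNReal.ofReal (exp (-(a * p.2)))
          * ENNReal.ofReal (|p.1 - p.2| ^ β) := fun p => by
    rw [ENNReal.ofReal_mul (by positivity), ENNReal.ofReal_mul (exp_pos _).le]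
  have hpow : 1 / a * (1 / a) ^ (β + 1) = a ^ (-(β + 2)) := by
    rw [one_div, inv_rpow ha.le, ← rpow_neg_one, ← rpow_neg ha.le, ← rpow_add ha]
    ring_nf
  simp_rw [hsplit]
  rw [lintegral_Ioi_prod_Ioi_exp_mul_exp_mul_abs_sub ha (φ := fun w => ENNReal.ofReal (w ^ β))
      (by fun_prop), lintegral_Ioi_exp_neg_mul_mul_rpow ha hβ,
    ← ENNReal.ofReal_mul (by positivity), ← mul_assoc, hpow]

lemma integrableOn_Ioi_prod_Ioi_exp_mul_exp_mul_abs_sub_rpow (ha : 0 < a) (hβ : -1 < β) :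
    IntegrableOn (fun p : ℝ × ℝ => exp (-(a * p.1)) * exp (-(a * p.2)) * |p.1 - p.2| ^ β)
      (Ioi 0 ×ˢ Ioi 0) := by
  refine (lintegral_ofReal_ne_top_iff_integrable (by fun_prop)
    (Eventually.of_forall fun p => by positivity)).mp ?_
  rw [lintegral_Ioi_prod_Ioi_exp_mul_exp_mul_abs_sub_rpow ha hβ]
  exact ENNReal.ofReal_ne_top

lemma integral_Ioi_prod_Ioi_exp_mul_exp_mul_abs_sub_rpow (ha : 0 < a) (hβ : -1 < β) :
    ∫ p in Ioi 0 ×ˢ Ioi 0, exp (-(a * p.1)) * exp (-(a * p.2)) * |p.1 - p.2| ^ β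
      = a ^ (-(β + 2)) * Gamma (β + 1) := by
  rw [integral_eq_lintegral_of_nonneg_ae (Eventually.of_forall fun p => by positivity)
      (by fun_prop), lintegral_Ioi_prod_Ioi_exp_mul_exp_mul_abs_sub_rpow ha hβ,
    ENNReal.toReal_ofReal]
  have := Gamma_pos_of_pos (show 0 < β + 1 by linarith)
  positivity

end Kernel

lemma tendsto_intervalIntegral_intervalIntegral_of_integrableOn {c : ℝ} {f : ℝ × ℝ → ℝ}
    (hf : IntegrableOn f (Ioi c ×ˢ Ioi c)) :
    Tendsto (fun T => ∫ u in c..T, ∫ v in c..T, f (u, v)) atTop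
      (𝓝 (∫ p in Ioi c ×ˢ Ioi c, f p)) := by
  have hunion : ⋃ T : ℝ, Ioc c T ×ˢ Ioc c T = Ioi c ×ˢ Ioi c := by
    ext ⟨u, v⟩
    simp only [mem_iUnion, mem_prod, mem_Ioc, mem_Ioi]
    constructor
    · rintro ⟨T, ⟨hu, -⟩, hv, -⟩
      exact ⟨hu, hv⟩
    · rintro ⟨hu, hv⟩
      exact ⟨max u v, ⟨hu, le_max_left u v⟩, hv, le_max_right u v⟩
  have hlim := tendsto_setIntegral_of_monotone (μ := volume) (f := f)
    (fun T => measurableSet_Ioc.prod measurableSet_Ioc)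
    (fun S T h => prod_mono (Ioc_subset_Ioc_right h) (Ioc_subset_Ioc_right h))
    (by rwa [hunion])
  rw [hunion] at hlim
  refine hlim.congr' ?_
  filter_upwards [eventually_ge_atTop c] with T hT
  rw [Measure.volume_eq_prod, setIntegral_prod _
    (hf.mono_set (prod_mono Ioc_subset_Ioi_self Ioc_subset_Ioi_self)), integral_of_le hT]
  exact setIntegral_congr_fun measurableSet_Ioc fun u _ => (integral_of_le hT).symm

theorem variance_limit_general (a H : ℝ) (ha : 0 < a) (hH1 : 1/2 < H) :
    Tendsto
      (fun T : ℝ => H * (2*H - 1) *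
        ∫ u in (0:ℝ)..T, ∫ v in (0:ℝ)..T,
          Real.exp (-(a*u)) * Real.exp (-(a*v)) * |u - v| ^ (2*H - 2))
      atTop (nhds (a ^ (-(2*H)) * H * Real.Gamma (2*H))) := by
  have hβ : -1 < 2*H - 2 := by linarith
  have hlim := (tendsto_intervalIntegral_intervalIntegral_of_integrableOn
    (integrableOn_Ioi_prod_Ioi_exp_mul_exp_mul_abs_sub_rpow ha hβ)).const_mul (H * (2*H - 1))
  rw [integral_Ioi_prod_Ioi_exp_mul_exp_mul_abs_sub_rpow ha hβ] at hlim
  have hGamma : Gamma (2*H) = (2*H - 1) * Gamma (2*H - 1) := by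
    simpa using Gamma_add_one (show 2*H - 1 ≠ 0 by linarith)
  convert hlim using 2
  rw [show 2*H - 2 + 2 = 2*H by ring, show 2*H - 2 + 1 = 2*H - 1 by ring, hGamma]
  ring

theorem variance_limit (a H : ℝ) (ha : 0 < a) (hH1 : 1/2 < H) (hH2 : H < 1) :
    Tendsto
      (fun T : ℝ => H * (2*H - 1) *
        ∫ u in (0:ℝ)..T, ∫ v in (0:ℝ)..T,
          Real.exp (-(a*u)) * Real.exp (-(a*v)) * |u - v| ^ (2*H - 2))
      atTop (nhds (a ^ (-(2*H)) * H * Real.Gamma (2*H))) :=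
  variance_limit_general a H ha hH1
end

section
/- Let a > 0, H ∈ (1/2,1), and set c = a^{-2H} H Γ(2H). Then |(1/T) ∫_0^T m(t) dt − c| ≤ C/T for all T ≥ 1, where m(t) = H(2H-1) ∫_0^t ∫_0^t e^{-au} e^{-av} |u-v|^{2H-2} du dv and C = (2H/a^{2H+1}) Γ(2H+1) (in particular, the error is O(1/T)). -/
/-!
Write `β = 2H - 2` and `E_c(t) = ∫₀ᵗ w^β e^{cw} dw`. Splitting the inner integral at `v = u`
and integrating by parts against `e^{-2au}` gives the closed form
`∫₀ᵗ∫₀ᵗ e^{-au} e^{-av} |u - v|^β du dv = (E_{-a}(t) - e^{-2at} E_a(t)) / a`.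
As `E_{-a}(∞) = Γ(β + 1) / a^{β + 1}`, the double integral falls short of its limit
`Γ(β + 1) / a^{β + 2}` by `((E_{-a}(∞) - E_{-a}(t)) + e^{-2at} E_a(t)) / a`. This deficit is
nonnegative and, for `β ≤ 0`, at most `t^β e^{-at} / a² + t^{β+1} e^{-at} / ((β + 1) a)`,
whose integral over `(0, ∞)` is `2 Γ(β + 1) / a^{β + 3}`. Averaging over `[0, T]` thus errs by
at most this constant over `T`, and the factor `H (2H - 1)` turns it into
`2H Γ(2H) / a^{2H+1} ≤ C`.
-/

open MeasureTheory Real Set intervalIntegral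

lemma abs_average_sub_le_of_sub_le {f g : ℝ → ℝ} {c T : ℝ} (hT : 0 < T)
    (hf : ContinuousOn f (Icc 0 T)) (hg : IntegrableOn g (Ioi 0))
    (hg₀ : ∀ t ∈ Ioi 0, 0 ≤ g t) (hfc : ∀ t ∈ Icc 0 T, f t ≤ c)
    (hcf : ∀ t ∈ Ioc 0 T, c - f t ≤ g t) :
    |(1 / T) * (∫ t in (0:ℝ)..T, f t) - c| ≤ (∫ t in Ioi 0, g t) / T := by
  have hfi : IntervalIntegrable f volume 0 T := hf.intervalIntegrable_of_Icc hT.le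
  have hsub : (1 / T) * (∫ t in (0:ℝ)..T, f t) - c = -((∫ t in (0:ℝ)..T, c - f t) / T) := by
    rw [intervalIntegral.integral_sub intervalIntegrable_const hfi,
      intervalIntegral.integral_const, smul_eq_mul, sub_zero]
    field_simp
    ring
  have hnonneg : 0 ≤ ∫ t in (0:ℝ)..T, c - f t :=
    integral_nonneg hT.le fun t ht => sub_nonneg.2 (hfc t ht)
  rw [hsub, abs_neg, abs_of_nonneg (div_nonneg hnonneg hT.le)]
  gcongr
  calc ∫ t in (0:ℝ)..T, c - f t ≤ ∫ t in Ioc 0 T, g t := by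
        rw [integral_of_le hT.le]
        exact setIntegral_mono_on (intervalIntegrable_const.sub hfi).1
          (hg.mono_set Ioc_subset_Ioi_self) measurableSet_Ioc hcf
    _ ≤ ∫ t in Ioi 0, g t :=
        setIntegral_mono_set hg ((ae_restrict_iff' measurableSet_Ioi).2 (.of_forall hg₀))
          Ioc_subset_Ioi_self.eventuallyLE

noncomputable def rpowExpIntegral (β c t : ℝ) : ℝ := ∫ w in (0:ℝ)..t, w ^ β * exp (c * w)

namespace rpowExpIntegral

variable {β : ℝ}

lemma intervalIntegrable (hβ : -1 < β) (c x y : ℝ) :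
    IntervalIntegrable (fun w : ℝ => w ^ β * exp (c * w)) volume x y :=
  (intervalIntegrable_rpow' hβ).mul_continuousOn (by fun_prop)

lemma continuous (hβ : -1 < β) (c : ℝ) : Continuous (rpowExpIntegral β c) :=
  continuous_primitive (intervalIntegrable hβ c) 0

lemma hasDerivAt (hβ : -1 < β) (c : ℝ) {t : ℝ} (ht : 0 < t) :
    HasDerivAt (rpowExpIntegral β c) (t ^ β * exp (c * t)) t :=
  integral_hasDerivAt_right (intervalIntegrable hβ c 0 t)
    ((by fun_prop : Measurable fun w : ℝ => w ^ β * exp (c * w))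
      |>.stronglyMeasurable.stronglyMeasurableAtFilter)
    ((continuousAt_rpow_const t β (Or.inl ht.ne')).mul (by fun_prop))

lemma nonneg (c : ℝ) {t : ℝ} (ht : 0 ≤ t) : 0 ≤ rpowExpIntegral β c t :=
  integral_nonneg ht fun _ hw => mul_nonneg (rpow_nonneg hw.1 β) (exp_nonneg _)

lemma le_exp_mul (hβ : -1 < β) {c t : ℝ} (hc : 0 ≤ c) (ht : 0 ≤ t) :
    rpowExpIntegral β c t ≤ exp (c * t) * (t ^ (β + 1) / (β + 1)) := by
  calc rpowExpIntegral β c t ≤ ∫ w in (0:ℝ)..t, w ^ β * exp (c * t) := by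
        refine integral_mono_on ht (intervalIntegrable hβ c 0 t)
          ((intervalIntegrable_rpow' hβ).mul_const _) fun w hw => ?_
        gcongr
        · exact rpow_nonneg hw.1 β
        · exact hw.2
    _ = exp (c * t) * (t ^ (β + 1) / (β + 1)) := by
        rw [intervalIntegral.integral_mul_const, integral_rpow (Or.inl hβ),
          zero_rpow (by linarith), sub_zero, mul_comm]

lemma integral_exp_mul (hβ : -1 < β) (c : ℝ) {d : ℝ} (hd : d ≠ 0) {t : ℝ} (ht : 0 ≤ t) :
    ∫ u in (0:ℝ)..t, exp (d * u) * rpowExpIntegral β c u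
      = (exp (d * t) * rpowExpIntegral β c t - rpowExpIntegral β (c + d) t) / d := by
  have hexp : Continuous fun u => exp (d * u) := by fun_prop
  have hF : ∀ u ∈ Ioo 0 t, HasDerivAt
      (fun u => (exp (d * u) * rpowExpIntegral β c u - rpowExpIntegral β (c + d) u) / d)
      (exp (d * u) * rpowExpIntegral β c u) u := by
    intro u hu
    have he : HasDerivAt (fun u => exp (d * u)) (exp (d * u) * d) u := by
      simpa using ((hasDerivAt_id u).const_mul d).exp
    refine (((he.mul (hasDerivAt hβ c hu.1)).sub (hasDerivAt hβ (c + d) hu.1)).div_const d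
      ).congr_deriv ?_
    rw [add_mul, exp_add]
    field_simp
    ring
  rw [integral_eq_sub_of_hasDerivAt_of_le ht _ hF]
  · simp [rpowExpIntegral]
  · exact (hexp.mul (continuous hβ c)).intervalIntegrable _ _
  · exact ((hexp.mul (continuous hβ c)).sub (continuous hβ (c + d))).div_const d |>.continuousOn

end rpowExpIntegral

lemma intervalIntegrable_abs_rpow_s3 {β : ℝ} (hβ : -1 < β) (x y : ℝ) :
    IntervalIntegrable (fun w : ℝ => |w| ^ β) volume x y := by
  have hnonneg : ∀ c, 0 ≤ c → IntervalIntegrable (fun w : ℝ => |w| ^ β) volume 0 c :=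
    fun c hc => (intervalIntegrable_rpow' hβ).congr_uIoo fun w hw => by
      rw [uIoo_of_le hc] at hw
      simp [abs_of_pos hw.1]
  have hzero : ∀ c, IntervalIntegrable (fun w : ℝ => |w| ^ β) volume 0 c := by
    intro c
    rcases le_total 0 c with hc | hc
    · exact hnonneg c hc
    · rw [IntervalIntegrable.iff_comp_neg, neg_zero]
      simpa using hnonneg (-c) (by linarith)
  exact (hzero x).symm.trans (hzero y)

lemma integral_abs_sub_rpow_mul {β : ℝ} (hβ : -1 < β) {f : ℝ → ℝ} (hf : Continuous f)
    {t u : ℝ} (hu : u ∈ Icc 0 t) :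
    ∫ v in (0:ℝ)..t, |u - v| ^ β * f v
      = (∫ w in (0:ℝ)..u, w ^ β * f (u - w))
        + ∫ w in (0:ℝ)..(t - u), w ^ β * f (u + w) := by
  set g : ℝ → ℝ := fun v => |u - v| ^ β * f v
  have hg : ∀ x y, IntervalIntegrable g volume x y := fun x y => by
    simpa only [g, abs_sub_comm u, sub_add_cancel] using
      ((intervalIntegrable_abs_rpow_s3 hβ (x - u) (y - u)).comp_sub_right u).mul_continuousOn
        hf.continuousOn
  have hleft : ∫ w in (0:ℝ)..u, w ^ β * f (u - w) = ∫ v in (0:ℝ)..u, g v := by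
    have h := integral_comp_sub_left g u (a := 0) (b := u)
    rw [sub_self, sub_zero] at h
    rw [← h]
    refine integral_congr fun w hw => ?_
    rw [uIcc_of_le hu.1] at hw
    simp [g, abs_of_nonneg hw.1]
  have hright : ∫ w in (0:ℝ)..(t - u), w ^ β * f (u + w) = ∫ v in u..t, g v := by
    have h := integral_comp_add_left g u (a := 0) (b := t - u)
    rw [add_zero, add_sub_cancel] at h
    rw [← h]
    refine integral_congr fun w hw => ?_
    rw [uIcc_of_le (sub_nonneg.2 hu.2)] at hw
    simp [g, abs_of_nonneg hw.1]
  rw [hleft, hright, integral_add_adjacent_intervals (hg 0 u) (hg u t)]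

section LaplaceTail

variable {a β : ℝ}

lemma integrableOn_rpow_mul_exp_neg_mul (ha : 0 < a) (hβ : -1 < β) :
    IntegrableOn (fun w : ℝ => w ^ β * exp (-a * w)) (Ioi 0) := by
  simpa using integrableOn_rpow_mul_exp_neg_mul_rpow hβ one_pos ha

lemma integral_rpow_mul_exp_neg_mul_Ioi_zero (ha : 0 < a) (hβ : -1 < β) :
    ∫ w in Ioi (0:ℝ), w ^ β * exp (-a * w) = Gamma (β + 1) / a ^ (β + 1) := by
  have h := integral_rpow_mul_exp_neg_mul_Ioi (by linarith : 0 < β + 1) ha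
  rw [add_sub_cancel_right, one_div, inv_rpow ha.le, inv_mul_eq_div] at h
  simpa [neg_mul] using h

lemma integral_rpow_mul_exp_neg_mul_Ioi_eq_sub (ha : 0 < a) (hβ : -1 < β) {t : ℝ}
    (ht : 0 ≤ t) :
    ∫ w in Ioi t, w ^ β * exp (-a * w)
      = (∫ w in Ioi (0:ℝ), w ^ β * exp (-a * w)) - rpowExpIntegral β (-a) t := by
  have hint := integrableOn_rpow_mul_exp_neg_mul ha hβ
  rw [rpowExpIntegral, integral_of_le ht, eq_sub_iff_add_eq', ← Ioc_union_Ioi_eq_Ioi ht,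
    setIntegral_union Ioc_disjoint_Ioi_same measurableSet_Ioi
      (hint.mono_set Ioc_subset_Ioi_self) (hint.mono_set (Ioi_subset_Ioi ht))]

lemma integral_rpow_mul_exp_neg_mul_Ioi_le (ha : 0 < a) (hβ : -1 < β) (hβ₀ : β ≤ 0)
    {t : ℝ} (ht : 0 < t) :
    ∫ w in Ioi t, w ^ β * exp (-a * w) ≤ t ^ β * exp (-a * t) / a := by
  calc ∫ w in Ioi t, w ^ β * exp (-a * w) ≤ ∫ w in Ioi t, t ^ β * exp (-a * w) :=
        setIntegral_mono_on
          ((integrableOn_rpow_mul_exp_neg_mul ha hβ).mono_set (Ioi_subset_Ioi ht.le))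
          ((exp_neg_integrableOn_Ioi t ha).const_mul _) measurableSet_Ioi fun w hw =>
            mul_le_mul_of_nonneg_right (rpow_le_rpow_of_nonpos ht hw.le hβ₀) (exp_nonneg _)
    _ = t ^ β * exp (-a * t) / a := by
        rw [MeasureTheory.integral_const_mul, integral_exp_mul_Ioi (neg_lt_zero.2 ha),
          neg_div_neg_eq, mul_div_assoc]

end LaplaceTail

lemma integral_exp_mul_exp_mul_abs_sub_rpow {a β : ℝ} (hβ : -1 < β) {t u : ℝ}
    (hu : u ∈ Icc 0 t) :
    ∫ v in (0:ℝ)..t, exp (-(a * u)) * exp (-(a * v)) * |u - v| ^ β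
      = exp (-(2 * a) * u) * (rpowExpIntegral β a u + rpowExpIntegral β (-a) (t - u)) := by
  calc ∫ v in (0:ℝ)..t, exp (-(a * u)) * exp (-(a * v)) * |u - v| ^ β
      = exp (-(a * u)) * ∫ v in (0:ℝ)..t, |u - v| ^ β * exp (-(a * v)) := by
        rw [← intervalIntegral.integral_const_mul]
        exact integral_congr fun v _ => by ring
    _ = exp (-(a * u)) * ((∫ w in (0:ℝ)..u, w ^ β * exp (-(a * (u - w))))
          + ∫ w in (0:ℝ)..(t - u), w ^ β * exp (-(a * (u + w)))) := by
        rw [integral_abs_sub_rpow_mul hβ (by fun_prop) hu]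
    _ = _ := by
        simp only [rpowExpIntegral, mul_add, ← intervalIntegral.integral_const_mul]
        congr 1 <;> refine integral_congr fun w _ => ?_ <;>
          rw [mul_left_comm, ← exp_add, mul_left_comm, ← exp_add] <;> ring_nf

noncomputable def expKernelIntegral (a β t : ℝ) : ℝ :=
  ∫ u in (0:ℝ)..t, ∫ v in (0:ℝ)..t, exp (-(a * u)) * exp (-(a * v)) * |u - v| ^ β

namespace expKernelIntegral

variable {a β : ℝ}

lemma eq_rpowExpIntegral (ha : a ≠ 0) (hβ : -1 < β) {t : ℝ} (ht : 0 ≤ t) :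
    expKernelIntegral a β t
      = (rpowExpIntegral β (-a) t - exp (-(2 * a) * t) * rpowExpIntegral β a t) / a := by
  have hleft : ∫ u in (0:ℝ)..t, exp (-(2 * a) * u) * rpowExpIntegral β a u
      = (rpowExpIntegral β (-a) t - exp (-(2 * a) * t) * rpowExpIntegral β a t) / (2 * a) := by
    rw [rpowExpIntegral.integral_exp_mul hβ a (by simpa using ha) ht,
      show a + -(2 * a) = -a by ring, div_neg, ← neg_div, neg_sub]
  have hright : ∫ u in (0:ℝ)..t, exp (-(2 * a) * u) * rpowExpIntegral β (-a) (t - u)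
      = (rpowExpIntegral β (-a) t - exp (-(2 * a) * t) * rpowExpIntegral β a t) / (2 * a) := by
    have h := integral_comp_sub_left
      (fun s => exp (-(2 * a) * (t - s)) * rpowExpIntegral β (-a) s) t (a := 0) (b := t)
    simp only [sub_sub_cancel, sub_self, sub_zero] at h
    have hsplit : ∀ s, exp (-(2 * a) * (t - s)) = exp (-(2 * a) * t) * exp (2 * a * s) :=
      fun s => by rw [← exp_add]; ring_nf
    rw [h]
    simp_rw [hsplit, mul_assoc (exp (-(2 * a) * t))]
    rw [intervalIntegral.integral_const_mul,
      rpowExpIntegral.integral_exp_mul hβ (-a) (mul_ne_zero two_ne_zero ha) ht,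
      show -a + 2 * a = a by ring, mul_div_assoc', mul_sub, ← mul_assoc, ← exp_add,
      show -(2 * a) * t + 2 * a * t = 0 by ring, exp_zero, one_mul]
  have hexp : Continuous fun u => exp (-(2 * a) * u) := by fun_prop
  have h₁ : IntervalIntegrable (fun u => exp (-(2 * a) * u) * rpowExpIntegral β a u)
      volume 0 t :=
    (hexp.mul (rpowExpIntegral.continuous hβ a)).intervalIntegrable _ _
  have h₂ : IntervalIntegrable (fun u => exp (-(2 * a) * u) * rpowExpIntegral β (-a) (t - u))
      volume 0 t :=
    Continuous.intervalIntegrable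
      (hexp.mul ((rpowExpIntegral.continuous hβ (-a)).comp (continuous_sub_left t))) _ _
  rw [expKernelIntegral, integral_congr fun u hu =>
    integral_exp_mul_exp_mul_abs_sub_rpow hβ (uIcc_of_le ht ▸ hu)]
  simp_rw [mul_add]
  rw [intervalIntegral.integral_add h₁ h₂, hleft, hright]
  field_simp
  ring

lemma Gamma_div_rpow_sub_eq (ha : 0 < a) (hβ : -1 < β) {t : ℝ} (ht : 0 ≤ t) :
    Gamma (β + 1) / a ^ (β + 2) - expKernelIntegral a β t
      = ((∫ w in Ioi t, w ^ β * exp (-a * w))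
          + exp (-(2 * a) * t) * rpowExpIntegral β a t) / a := by
  rw [eq_rpowExpIntegral ha.ne' hβ ht, integral_rpow_mul_exp_neg_mul_Ioi_eq_sub ha hβ ht,
    integral_rpow_mul_exp_neg_mul_Ioi_zero ha hβ, show β + 2 = β + 1 + 1 by ring,
    rpow_add_one ha.ne']
  field_simp
  ring

lemma le_Gamma_div_rpow (ha : 0 < a) (hβ : -1 < β) {t : ℝ} (ht : 0 ≤ t) :
    expKernelIntegral a β t ≤ Gamma (β + 1) / a ^ (β + 2) := by
  have htail : 0 ≤ ∫ w in Ioi t, w ^ β * exp (-a * w) :=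
    setIntegral_nonneg measurableSet_Ioi fun w hw =>
      mul_nonneg (rpow_nonneg (ht.trans hw.le) β) (exp_nonneg _)
  have := rpowExpIntegral.nonneg (β := β) a ht
  rw [← sub_nonneg, Gamma_div_rpow_sub_eq ha hβ ht]
  positivity

lemma Gamma_div_rpow_sub_le (ha : 0 < a) (hβ : -1 < β) (hβ₀ : β ≤ 0) {t : ℝ}
    (ht : 0 < t) :
    Gamma (β + 1) / a ^ (β + 2) - expKernelIntegral a β t
      ≤ t ^ β * exp (-a * t) / a ^ 2 + t ^ (β + 1) * exp (-a * t) / ((β + 1) * a) := by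
  have hP : exp (-(2 * a) * t) * rpowExpIntegral β a t
      ≤ t ^ (β + 1) * exp (-a * t) / (β + 1) :=
    calc exp (-(2 * a) * t) * rpowExpIntegral β a t
        ≤ exp (-(2 * a) * t) * (exp (a * t) * (t ^ (β + 1) / (β + 1))) := by
          gcongr
          exact rpowExpIntegral.le_exp_mul hβ ha.le ht.le
      _ = t ^ (β + 1) * exp (-a * t) / (β + 1) := by
          rw [← mul_assoc, ← exp_add]
          ring_nf
  rw [Gamma_div_rpow_sub_eq ha hβ ht.le]
  calc _ ≤ (t ^ β * exp (-a * t) / a + t ^ (β + 1) * exp (-a * t) / (β + 1)) / a := by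
        gcongr
        exact integral_rpow_mul_exp_neg_mul_Ioi_le ha hβ hβ₀ ht
    _ = _ := by field_simp

theorem abs_average_sub_le (ha : 0 < a) (hβ : -1 < β) (hβ₀ : β ≤ 0) {T : ℝ} (hT : 0 < T) :
    |(1 / T) * (∫ t in (0:ℝ)..T, expKernelIntegral a β t) - Gamma (β + 1) / a ^ (β + 2)|
      ≤ 2 * Gamma (β + 1) / a ^ (β + 3) / T := by
  have hβ₁ : 0 < β + 1 := by linarith
  have hcont : ContinuousOn (expKernelIntegral a β) (Icc 0 T) :=
    (((rpowExpIntegral.continuous hβ (-a)).sub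
      ((by fun_prop : Continuous fun t => exp (-(2 * a) * t)).mul
        (rpowExpIntegral.continuous hβ a))).div_const a).continuousOn.congr
      fun t ht => eq_rpowExpIntegral ha.ne' hβ ht.1
  have hg₁ : IntegrableOn (fun t => t ^ β * exp (-a * t) / a ^ 2) (Ioi 0) :=
    (integrableOn_rpow_mul_exp_neg_mul ha hβ).div_const _
  have hg₂ : IntegrableOn (fun t => t ^ (β + 1) * exp (-a * t) / ((β + 1) * a)) (Ioi 0) :=
    (integrableOn_rpow_mul_exp_neg_mul ha (by linarith)).div_const _
  refine (abs_average_sub_le_of_sub_le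
    (g := fun t => t ^ β * exp (-a * t) / a ^ 2 + t ^ (β + 1) * exp (-a * t) / ((β + 1) * a))
    hT hcont (hg₁.add hg₂) (fun t ht => ?_) (fun t ht => le_Gamma_div_rpow ha hβ ht.1)
    (fun t ht => Gamma_div_rpow_sub_le ha hβ hβ₀ ht.1)).trans_eq ?_
  · have : 0 ≤ t := le_of_lt ht
    positivity
  rw [integral_add hg₁ hg₂, MeasureTheory.integral_div, MeasureTheory.integral_div,
    integral_rpow_mul_exp_neg_mul_Ioi_zero ha hβ,
    integral_rpow_mul_exp_neg_mul_Ioi_zero ha (by linarith),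
    Gamma_add_one hβ₁.ne',
    rpow_add_one ha.ne' (β + 1), show β + 3 = β + 1 + 2 by ring, rpow_add ha (β + 1) 2,
    rpow_two]
  field_simp
  ring

end expKernelIntegral

section BiasConstants

variable {a H : ℝ}

lemma Gamma_two_mul_eq_mul_Gamma_sub_one (hH : 1 / 2 < H) :
    Gamma (2 * H) = (2 * H - 1) * Gamma (2 * H - 1) := by
  rw [← Gamma_add_one (by linarith)]
  ring_nf

lemma mul_Gamma_div_rpow_eq (ha : 0 < a) (hH : 1 / 2 < H) :
    H * (2 * H - 1) * (Gamma (2 * H - 2 + 1) / a ^ (2 * H - 2 + 2))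
      = a ^ (-(2 * H)) * H * Gamma (2 * H) := by
  rw [rpow_neg ha.le, Gamma_two_mul_eq_mul_Gamma_sub_one hH,
    show 2 * H - 2 + 1 = 2 * H - 1 by ring, show 2 * H - 2 + 2 = 2 * H by ring]
  ring

lemma mul_two_Gamma_div_rpow_le (ha : 0 < a) (hH : 1 / 2 < H) :
    H * (2 * H - 1) * (2 * Gamma (2 * H - 2 + 1) / a ^ (2 * H - 2 + 3))
      ≤ 2 * H / a ^ (2 * H + 1) * Gamma (2 * H + 1) := by
  set X := H * (2 * H - 1) * Gamma (2 * H - 1) / a ^ (2 * H + 1)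
  have hX : 0 < X := by
    have := Gamma_pos_of_pos (by linarith : 0 < 2 * H - 1)
    have : 0 < H * (2 * H - 1) := by nlinarith
    positivity
  calc _ = 2 * X := by
        rw [show 2 * H - 2 + 1 = 2 * H - 1 by ring, show 2 * H - 2 + 3 = 2 * H + 1 by ring]
        ring
    _ ≤ 4 * H * X := by gcongr; linarith
    _ = _ := by
        rw [Gamma_add_one (s := 2 * H) (by linarith), Gamma_two_mul_eq_mul_Gamma_sub_one hH]
        ring

end BiasConstants

theorem bias_term_bound (a H : ℝ) (ha : 0 < a) (hH1 : 1/2 < H) (hH2 : H < 1)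
    (m : ℝ → ℝ)
    (hm : ∀ t, m t = H * (2*H - 1) *
      ∫ u in (0:ℝ)..t, ∫ v in (0:ℝ)..t,
        Real.exp (-(a*u)) * Real.exp (-(a*v)) * |u - v| ^ (2*H - 2)) :
    ∀ T : ℝ, 1 ≤ T →
      |(1/T) * (∫ t in (0:ℝ)..T, m t) - a ^ (-(2*H)) * H * Real.Gamma (2*H)|
        ≤ (2*H / a ^ (2*H + 1)) * Real.Gamma (2*H + 1) / T := by
  intro T hT
  have hT₀ : 0 < T := one_pos.trans_le hT
  have hK : 0 < H * (2 * H - 1) := by nlinarith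
  have hm' : ∀ t, m t = H * (2 * H - 1) * expKernelIntegral a (2 * H - 2) t := hm
  calc _ = H * (2 * H - 1) * |(1 / T) * (∫ t in (0:ℝ)..T, expKernelIntegral a (2 * H - 2) t)
        - Gamma (2 * H - 2 + 1) / a ^ (2 * H - 2 + 2)| := by
        simp_rw [hm', intervalIntegral.integral_const_mul]
        rw [← mul_Gamma_div_rpow_eq ha hH1, mul_left_comm (1 / T), ← mul_sub, abs_mul,
          abs_of_pos hK]
    _ ≤ H * (2 * H - 1) * (2 * Gamma (2 * H - 2 + 1) / a ^ (2 * H - 2 + 3) / T) := by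
        gcongr
        exact expKernelIntegral.abs_average_sub_le ha (by linarith) (by linarith) hT₀
    _ ≤ _ := by
        rw [← mul_div_assoc]
        exact div_le_div_of_nonneg_right (mul_two_Gamma_div_rpow_le ha hH1) hT₀.le
end

section
/- Let H ∈ (1/2, 3/4). Then the constant σ_H² = ((2H−1)/(H Γ(2H)²))² ∫_ℝ ( ∫_{[0,∞)²} e^{-(u+v)} |u−v−x|^{2H−2} du dv )² dx is finite. -/
/-!
Write `α = 2H - 2 ∈ (-1, -1/2)` and `t = 1 + |x|`. The inner double integral is at most
`C t ^ α`: where `|u - v - x| ≥ t / 2` the power `|u - v - x| ^ α` is already `≲ t ^ α`, and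
elsewhere `u + v ≥ |x| - |u - v - x|` is large, so half of the weight `exp (-(u + v))` is
`≲ t⁻¹ ≤ t ^ α`. What remains, `exp (-(u + v) / 2) |u - v - x| ^ α`, has double integral bounded
uniformly in `x` because `|s| ^ α` is locally integrable (`α > -1`) and at most `1` for `|s| ≥ 1`.
The square is then dominated by `C² t ^ (2α)`, which is integrable since `2α < -1`.
-/

open MeasureTheory Real Set

section AbsRpowKernel

variable {α : ℝ}

lemma locallyIntegrable_abs_rpow (hα : -1 < α) : LocallyIntegrable (fun s : ℝ => |s| ^ α) :=
  locallyIntegrable_of_norm_le_rpow (μ := volume) (C := 1) (α := -α) (by simp)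
    (by simpa using neg_lt.mp hα)
    (ae_of_all _ fun s => by
      simp [Real.norm_eq_abs, abs_of_nonneg (rpow_nonneg (abs_nonneg s) α)])
    (measurable_id.abs.pow_const α).aestronglyMeasurable

lemma integrable_indicator_Icc_abs_rpow (hα : -1 < α) :
    Integrable ((Icc (-1) 1).indicator fun s : ℝ => |s| ^ α) :=
  ((locallyIntegrable_abs_rpow hα).integrableOn_isCompact isCompact_Icc).integrable_indicator
    measurableSet_Icc

lemma exp_neg_mul_mul_abs_rpow_le_add_indicator (hα : α ≤ 0) {r v : ℝ} (hr : 0 ≤ r)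
    (hv : 0 ≤ v) (c : ℝ) :
    exp (-r * v) * |v - c| ^ α ≤
      exp (-r * v) + (Icc (-1) 1).indicator (fun s => |s| ^ α) (v - c) := by
  rcases le_or_gt |v - c| 1 with hvc | hvc
  · rw [indicator_of_mem (show v - c ∈ Icc (-1) 1 from abs_le.mp hvc)]
    have : exp (-r * v) ≤ 1 := exp_le_one_iff.2 (by nlinarith)
    nlinarith [exp_pos (-r * v), rpow_nonneg (abs_nonneg (v - c)) α]
  · have : |v - c| ^ α ≤ 1 := rpow_le_one_of_one_le_of_nonpos hvc.le hα
    have : 0 ≤ (Icc (-1) 1).indicator (fun s => |s| ^ α) (v - c) :=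
      indicator_nonneg (fun s _ => rpow_nonneg (abs_nonneg s) α) _
    nlinarith [exp_pos (-r * v)]

lemma integrableOn_exp_neg_mul_add_indicator_abs_rpow (hα : -1 < α) {r : ℝ} (hr : 0 < r)
    (c : ℝ) :
    IntegrableOn
      (fun v => exp (-r * v) + (Icc (-1) 1).indicator (fun s => |s| ^ α) (v - c)) (Ioi 0) :=
  (exp_neg_integrableOn_Ioi 0 hr).add
    ((integrable_indicator_Icc_abs_rpow hα).comp_sub_right c).integrableOn

lemma integrableOn_exp_neg_mul_mul_abs_rpow (hα1 : -1 < α) (hα0 : α ≤ 0) {r : ℝ} (hr : 0 < r)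
    (c : ℝ) : IntegrableOn (fun v => exp (-r * v) * |v - c| ^ α) (Ioi 0) := by
  refine (integrableOn_exp_neg_mul_add_indicator_abs_rpow hα1 hr c).mono' (by fun_prop) ?_
  filter_upwards [ae_restrict_mem measurableSet_Ioi] with v (hv : 0 < v)
  rw [norm_of_nonneg (by positivity)]
  exact exp_neg_mul_mul_abs_rpow_le_add_indicator hα0 hr.le hv.le c

lemma setIntegral_exp_neg_mul_mul_abs_rpow_le (hα1 : -1 < α) (hα0 : α ≤ 0) {r : ℝ}
    (hr : 0 < r) (c : ℝ) :
    ∫ v in Ioi 0, exp (-r * v) * |v - c| ^ α ≤ r⁻¹ + ∫ s in Icc (-1) 1, |s| ^ α := by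
  have hind := (integrable_indicator_Icc_abs_rpow hα1).comp_sub_right c
  calc ∫ v in Ioi 0, exp (-r * v) * |v - c| ^ α
      ≤ ∫ v in Ioi 0, (exp (-r * v) + (Icc (-1) 1).indicator (fun s => |s| ^ α) (v - c)) :=
        setIntegral_mono_on (integrableOn_exp_neg_mul_mul_abs_rpow hα1 hα0 hr c)
          (integrableOn_exp_neg_mul_add_indicator_abs_rpow hα1 hr c) measurableSet_Ioi
          fun v hv => exp_neg_mul_mul_abs_rpow_le_add_indicator hα0 hr.le (le_of_lt hv) c
    _ = r⁻¹ + ∫ v in Ioi 0, (Icc (-1) 1).indicator (fun s => |s| ^ α) (v - c) := by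
        rw [integral_add (exp_neg_integrableOn_Ioi 0 hr) hind.integrableOn,
          integral_exp_mul_Ioi (neg_lt_zero.2 hr)]
        simp
    _ ≤ r⁻¹ + ∫ v, (Icc (-1) 1).indicator (fun s => |s| ^ α) (v - c) :=
        add_le_add_right (setIntegral_le_integral hind
          (ae_of_all _ fun v => indicator_nonneg (fun s _ => rpow_nonneg (abs_nonneg s) α) _)) _
    _ = r⁻¹ + ∫ s in Icc (-1) 1, |s| ^ α := by
        rw [integral_sub_right_eq_self, integral_indicator measurableSet_Icc]

lemma exp_neg_mul_rpow_le_of_le_one_add_add {w s t : ℝ} (hα1 : -1 ≤ α) (hα0 : α ≤ 0)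
    (hs : 0 ≤ s) (ht : 1 ≤ t) (hts : t ≤ 1 + w + s) :
    exp (-w) * s ^ α ≤ t ^ α * (2 * exp (-w) + 4 * (exp (-(w / 2)) * s ^ α)) := by
  have ht0 : 0 < t := by linarith
  have hsα : 0 ≤ s ^ α := rpow_nonneg hs α
  have htα : 0 ≤ t ^ α := rpow_nonneg ht0.le α
  rcases le_or_gt (t / 2) s with hst | hst
  · have hhalf : (2⁻¹ : ℝ) ^ α ≤ 2 := by
      simpa [rpow_neg_one] using
        rpow_le_rpow_of_exponent_ge (by norm_num : (0:ℝ) < 2⁻¹) (by norm_num) hα1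
    have hs_le : s ^ α ≤ 2 * t ^ α :=
      calc s ^ α ≤ (t * 2⁻¹) ^ α := rpow_le_rpow_of_nonpos (by positivity) (by linarith) hα0
        _ = t ^ α * 2⁻¹ ^ α := mul_rpow ht0.le (by norm_num)
        _ ≤ 2 * t ^ α := by nlinarith
    calc exp (-w) * s ^ α ≤ exp (-w) * (2 * t ^ α) := by gcongr
      _ ≤ t ^ α * (2 * exp (-w) + 4 * (exp (-(w / 2)) * s ^ α)) := by
        nlinarith [mul_nonneg htα (mul_nonneg (exp_pos (-(w / 2))).le hsα)]
  · have hexp : exp (-(w / 2)) ≤ 4 * t ^ α := by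
      have h4exp : t ≤ 4 * exp (w / 2) := by linarith [add_one_le_exp (w / 2)]
      have hinv : t⁻¹ ≤ t ^ α := by
        simpa [rpow_neg_one] using rpow_le_rpow_of_exponent_le ht hα1
      rw [exp_neg]
      calc (exp (w / 2))⁻¹ ≤ (t / 4)⁻¹ := by gcongr; linarith
        _ = 4 * t⁻¹ := by field_simp
        _ ≤ 4 * t ^ α := by gcongr
    have hsplit : exp (-w) = exp (-(w / 2)) * exp (-(w / 2)) := by rw [← exp_add]; ring_nf
    rw [hsplit]
    nlinarith [exp_pos (-(w / 2)), mul_nonneg (exp_pos (-(w / 2))).le hsα,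
      mul_le_mul_of_nonneg_right hexp (mul_nonneg (exp_pos (-(w / 2))).le hsα)]

lemma setIntegral_exp_neg_add_mul_abs_rpow_le (hα1 : -1 < α) (hα0 : α ≤ 0) {u : ℝ}
    (hu : 0 ≤ u) (x : ℝ) :
    ∫ v in Ioi 0, exp (-(u + v)) * |u - v - x| ^ α ≤
      (1 + |x|) ^ α * (2 * exp (-u) + 4 * exp (-2⁻¹ * u) * (2 + ∫ s in Icc (-1) 1, |s| ^ α)) := by
  have hkernel :=
    integrableOn_exp_neg_mul_mul_abs_rpow hα1 hα0 (by norm_num : (0:ℝ) < 2⁻¹) (u - x)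
  have hdom : IntegrableOn (fun v => (1 + |x|) ^ α * (2 * exp (-u) * exp (-v) +
      4 * exp (-2⁻¹ * u) * (exp (-2⁻¹ * v) * |v - (u - x)| ^ α))) (Ioi 0) :=
    (((integrableOn_exp_neg_Ioi 0).const_mul _).add (hkernel.const_mul _)).const_mul _
  calc ∫ v in Ioi 0, exp (-(u + v)) * |u - v - x| ^ α
      ≤ ∫ v in Ioi 0, (1 + |x|) ^ α * (2 * exp (-u) * exp (-v) +
          4 * exp (-2⁻¹ * u) * (exp (-2⁻¹ * v) * |v - (u - x)| ^ α)) := by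
        refine integral_mono_of_nonneg (ae_of_all _ fun v => by positivity) hdom ?_
        filter_upwards [ae_restrict_mem measurableSet_Ioi] with v (hv : 0 < v)
        have hx : |x| ≤ (u + v) + |u - v - x| := by
          have := abs_sub (u - v) (u - v - x)
          rw [sub_sub_cancel] at this
          linarith [abs_le.2 (⟨by linarith, by linarith⟩ : -(u + v) ≤ u - v ∧ u - v ≤ u + v)]
        refine (exp_neg_mul_rpow_le_of_le_one_add_add hα1.le hα0 (abs_nonneg (u - v - x))
          (le_add_of_nonneg_right (abs_nonneg x)) (by linarith)).trans (le_of_eq ?_)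
        rw [show |u - v - x| = |v - (u - x)| by rw [abs_sub_comm]; ring_nf,
          show -(u + v) = -u + -v by ring, show -((u + v) / 2) = -2⁻¹ * u + -2⁻¹ * v by ring,
          exp_add, exp_add]
        ring
    _ ≤ (1 + |x|) ^ α * (2 * exp (-u) + 4 * exp (-2⁻¹ * u) * (2 + ∫ s in Icc (-1) 1, |s| ^ α)) := by
        rw [integral_const_mul, integral_add ((integrableOn_exp_neg_Ioi 0).const_mul _)
          (hkernel.const_mul _), integral_const_mul, integral_const_mul, integral_exp_neg_Ioi_zero,
          mul_one]
        have := setIntegral_exp_neg_mul_mul_abs_rpow_le hα1 hα0 (by norm_num : (0:ℝ) < 2⁻¹) (u - x)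
        rw [inv_inv] at this
        gcongr

lemma integral_exp_neg_add_mul_abs_rpow_le (hα1 : -1 < α) (hα0 : α ≤ 0) (x : ℝ) :
    ∫ u in Ioi 0, ∫ v in Ioi 0, exp (-(u + v)) * |u - v - x| ^ α ≤
      (2 + 8 * (2 + ∫ s in Icc (-1) 1, |s| ^ α)) * (1 + |x|) ^ α := by
  have hexp_half := exp_neg_integrableOn_Ioi 0 (by norm_num : (0:ℝ) < 2⁻¹)
  have hdom : IntegrableOn (fun u => (1 + |x|) ^ α * (2 * exp (-u) +
      4 * exp (-2⁻¹ * u) * (2 + ∫ s in Icc (-1) 1, |s| ^ α))) (Ioi 0) :=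
    (((integrableOn_exp_neg_Ioi 0).const_mul _).add
      ((hexp_half.const_mul _).mul_const _)).const_mul _
  calc ∫ u in Ioi 0, ∫ v in Ioi 0, exp (-(u + v)) * |u - v - x| ^ α
      ≤ ∫ u in Ioi 0, (1 + |x|) ^ α * (2 * exp (-u) +
          4 * exp (-2⁻¹ * u) * (2 + ∫ s in Icc (-1) 1, |s| ^ α)) := by
        refine integral_mono_of_nonneg
          (ae_of_all _ fun u => integral_nonneg fun v => by positivity) hdom ?_
        filter_upwards [ae_restrict_mem measurableSet_Ioi] with u (hu : 0 < u)
        exact setIntegral_exp_neg_add_mul_abs_rpow_le hα1 hα0 hu.le x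
    _ = (2 + 8 * (2 + ∫ s in Icc (-1) 1, |s| ^ α)) * (1 + |x|) ^ α := by
        rw [integral_const_mul, integral_add ((integrableOn_exp_neg_Ioi 0).const_mul _)
          ((hexp_half.const_mul _).mul_const _), integral_const_mul, integral_mul_const,
          integral_const_mul, integral_exp_neg_Ioi_zero, integral_exp_mul_Ioi (by norm_num)]
        norm_num
        ring

end AbsRpowKernel

lemma stronglyMeasurable_integral_exp_neg_add_mul_abs_rpow (α : ℝ) :
    StronglyMeasurable fun x : ℝ =>
      ∫ u in Ioi 0, ∫ v in Ioi 0, exp (-(u + v)) * |u - v - x| ^ α := by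
  have hmeas : Measurable fun q : (ℝ × ℝ) × ℝ =>
      exp (-(q.1.2 + q.2)) * |q.1.2 - q.2 - q.1.1| ^ α := by fun_prop
  exact hmeas.stronglyMeasurable.integral_prod_right'.integral_prod_right'

lemma integrable_sq_of_abs_le_mul_one_add_abs_rpow {f : ℝ → ℝ} {C β : ℝ} (hβ : β < -2⁻¹)
    (hf : AEStronglyMeasurable f) (hle : ∀ x, |f x| ≤ C * (1 + |x|) ^ β) :
    Integrable fun x => f x ^ 2 := by
  have hdecay : Integrable fun x : ℝ => C ^ 2 * (1 + |x|) ^ (2 * β) := by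
    simpa [Real.norm_eq_abs] using
      (integrable_one_add_norm (E := ℝ) (μ := volume) (r := -(2 * β))
        (by simp; linarith)).const_mul (C ^ 2)
  refine hdecay.mono' (hf.pow 2) (ae_of_all _ fun x => ?_)
  calc ‖f x ^ 2‖ = |f x| ^ 2 := by simp
    _ ≤ (C * (1 + |x|) ^ β) ^ 2 := pow_le_pow_left₀ (abs_nonneg _) (hle x) 2
    _ = C ^ 2 * (1 + |x|) ^ (2 * β) := by
        rw [mul_pow, ← rpow_natCast ((1 + |x|) ^ β), ← rpow_mul (by positivity), mul_comm β,
          Nat.cast_ofNat]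

theorem sigmaH_finite (H : ℝ) (hH1 : 1/2 < H) (hH2 : H < 3/4) :
    Integrable (fun x : ℝ =>
      (∫ u in Ioi (0:ℝ), ∫ v in Ioi (0:ℝ),
        Real.exp (-(u + v)) * |u - v - x| ^ (2*H - 2)) ^ 2) := by
  have hα1 : -1 < 2 * H - 2 := by linarith
  have hα0 : 2 * H - 2 ≤ 0 := by linarith
  exact integrable_sq_of_abs_le_mul_one_add_abs_rpow (by linarith : 2 * H - 2 < -2⁻¹)
    (stronglyMeasurable_integral_exp_neg_add_mul_abs_rpow _).aestronglyMeasurable fun x =>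
      (abs_of_nonneg (integral_nonneg fun u => integral_nonneg fun v => by positivity)).trans_le
        (integral_exp_neg_add_mul_abs_rpow_le hα1 hα0 x)
end
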